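/- arXiv:1801.03413 — 8 statements merged into one kernel-verified Lean document; each statement's English description precedes it below -/
import Mathlib

section
/- For every finite poset P, the cover-incomparability graph G_P is a connected graph. -/
/-- The cover-incomparability graph of a poset: distinct `u, v` are adjacent
iff `u ⋖ v`, or `v ⋖ u`, or `u` and `v` are incomparable. -/
def ciGraph (α : Type*) [PartialOrder α] : SimpleGraph α where
  Adj u v := u ⋖ v ∨ v ⋖ u ∨ (¬ u ≤ v ∧ ¬ v ≤ u)
  symm := by
    constructor
    intro u v h
    rcases h with h | h | h
    · exact Or.inr (Or.inl h)
    · exact Or.inl h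
    · exact Or.inr (Or.inr ⟨h.2, h.1⟩)
  loopless := by
    constructor
    intro u h
    rcases h with h | h | h
    · exact absurd h.lt (lt_irrefl u)
    · exact absurd h.lt (lt_irrefl u)
    · exact h.1 le_rfl

open SimpleGraph

section
variable {α : Type*} [PartialOrder α]

theorem hasse_le_ciGraph : hasse α ≤ ciGraph α := fun _ _ h => Or.imp_right Or.inl h

theorem hasse_reachable_of_le [LocallyFiniteOrder α] {a b : α} (hab : a ≤ b) :
    (hasse α).Reachable a b := by
  rw [reachable_iff_reflTransGen]
  exact Relation.ReflTransGen.mono (fun _ _ h => Or.inl h) a b (le_iff_reflTransGen_covBy.mp hab)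

theorem ciGraph_preconnected [LocallyFiniteOrder α] : (ciGraph α).Preconnected := by
  intro u v
  by_cases huv : u ≤ v
  · exact (hasse_reachable_of_le huv).mono hasse_le_ciGraph
  by_cases hvu : v ≤ u
  · exact ((hasse_reachable_of_le hvu).mono hasse_le_ciGraph).symm
  exact Adj.reachable (Or.inr (Or.inr ⟨huv, hvu⟩))

end

/-- For every finite poset `P`, the cover-incomparability graph `G_P` is connected. -/
theorem stmt0 (α : Type*) [Fintype α] [PartialOrder α] [Nonempty α] :
    (ciGraph α).Connected := by
  classical
  let : LocallyFiniteOrder α := Fintype.toLocallyFiniteOrder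
  exact ⟨ciGraph_preconnected⟩
end

section
/- Let P be a finite poset and G_P its cover-incomparability graph. Then G_P has at most 2 vertices of degree 1. -/
/-!
A vertex `v` of degree one with neighbour `w` is comparable to every other vertex. If some
vertex lies above `v`, the cover of `v` below it must be `w`; a vertex below `v` would likewise
force `w ⋖ v`, which is absurd, so `v` is the least element. Dually, if some vertex lies below
`v`, then `v` is the greatest element. Hence, as soon as the poset has a third element, every
degree-one vertex is the bottom or the top, and there is at most one of each.
-/

namespace ciGraph

open OrderDual

variable {α : Type*} [PartialOrder α] {u v w x : α}

lemma adj_toDual_iff : (ciGraph αᵒᵈ).Adj (toDual u) (toDual v) ↔ (ciGraph α).Adj u v := by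
  simp only [ciGraph, toDual_covBy_toDual_iff, toDual_le_toDual]
  tauto

lemma lt_or_gt_of_not_adj (hne : u ≠ v) (h : ¬ (ciGraph α).Adj u v) : u < v ∨ v < u := by
  by_contra! hc
  exact h <| Or.inr <| Or.inr
    ⟨fun huv ↦ hc.1 (huv.lt_of_ne hne), fun hvu ↦ hc.2 (hvu.lt_of_ne hne.symm)⟩

variable [IsStronglyAtomic α] [IsStronglyCoatomic α]

lemma isBot_of_lt (hw : ∀ u, (ciGraph α).Adj v u → u = w) (hvx : v < x) : IsBot v := by
  obtain ⟨z, hvz, -⟩ := exists_covBy_le_of_lt hvx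
  have hvw : v ⋖ w := hw z (Or.inl hvz) ▸ hvz
  intro u
  rcases eq_or_ne u v with rfl | huv
  · exact le_rfl
  by_cases hadj : (ciGraph α).Adj v u
  · exact hw u hadj ▸ hvw.le
  rcases lt_or_gt_of_not_adj huv.symm hadj with hvu | huv'
  · exact hvu.le
  · obtain ⟨z, -, hzv⟩ := exists_le_covBy_of_lt huv'
    have hwv : w ⋖ v := hw z (Or.inr (Or.inl hzv)) ▸ hzv
    exact absurd (hvw.lt.trans hwv.lt) (lt_irrefl v)

lemma isTop_of_lt (hw : ∀ u, (ciGraph α).Adj v u → u = w) (hxv : x < v) : IsTop v :=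
  isBot_of_lt (α := αᵒᵈ) (v := toDual v) (w := toDual w) (x := toDual x)
    (fun u hu ↦ congrArg toDual (hw (ofDual u) (adj_toDual_iff.mp hu))) (toDual_lt_toDual.mpr hxv)

lemma isBot_or_isTop_of_neighborSet_eq_singleton (hN : (ciGraph α).neighborSet v = {w})
    (hxv : x ≠ v) (hxw : x ≠ w) : IsBot v ∨ IsTop v := by
  have hw : ∀ u, (ciGraph α).Adj v u → u = w := fun u hu ↦ by
    simpa [hN] using (show u ∈ (ciGraph α).neighborSet v from hu)
  rcases lt_or_gt_of_not_adj hxv.symm (fun h ↦ hxw (hw x h)) with hvx | hxv'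
  · exact Or.inl (isBot_of_lt hw hvx)
  · exact Or.inr (isTop_of_lt hw hxv')

end ciGraph

/-- The cover-incomparability graph of a finite poset has at most two vertices of
degree 1 (i.e. with exactly one neighbor). -/
theorem stmt3 (α : Type*) [Fintype α] [PartialOrder α] :
    {v : α | ((ciGraph α).neighborSet v).ncard = 1}.ncard ≤ 2 := by
  set S := {v : α | ((ciGraph α).neighborSet v).ncard = 1}
  by_cases hS : ∀ v ∈ S, IsBot v ∨ IsTop v
  · calc S.ncard ≤ ({v | IsBot v} ∪ {v | IsTop v}).ncard := Set.ncard_le_ncard hS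
      _ ≤ {v : α | IsBot v}.ncard + {v : α | IsTop v}.ncard := Set.ncard_union_le _ _
      _ ≤ 1 + 1 := add_le_add (Set.ncard_le_one_iff_subsingleton.mpr (Set.subsingleton_isBot α))
          (Set.ncard_le_one_iff_subsingleton.mpr (Set.subsingleton_isTop α))
  · push Not at hS
    obtain ⟨v, hv, hbot, htop⟩ := hS
    obtain ⟨w, hw⟩ := Set.ncard_eq_one.mp hv
    have huniv : (Set.univ : Set α) ⊆ {v, w} := fun x _ ↦ by
      by_contra hx
      simp only [Set.mem_insert_iff, Set.mem_singleton_iff, not_or] at hx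
      rcases ciGraph.isBot_or_isTop_of_neighborSet_eq_singleton hw hx.1 hx.2 with h | h
      exacts [hbot h, htop h]
    calc S.ncard ≤ (Set.univ : Set α).ncard := Set.ncard_le_ncard (Set.subset_univ S)
      _ ≤ ({v, w} : Set α).ncard := Set.ncard_le_ncard huniv
      _ ≤ 2 := (Set.ncard_insert_le v {w}).trans (by simp)
end

section
/- Let P be a finite poset and G_P its cover-incomparability graph, and let x, y, z be three distinct vertices such that xy is an edge of G_P, while xz and yz are not edges of G_P. Then either (x << z and y << z) or (z << x and z << y), where a << b means a < b in P and b does not cover a. -/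
/-- `a` and `b` are incomparable. -/
def IncompRel' {α : Type*} [PartialOrder α] (a b : α) : Prop := ¬ a ≤ b ∧ ¬ b ≤ a

/-- `a << b`: `a < b` but `a` is not covered by `b`. -/
def LtNotCov {α : Type*} [PartialOrder α] (a b : α) : Prop := a < b ∧ ¬ a ⋖ b

/-- If `x, y, z` are distinct vertices of the cover-incomparability graph of a finite
poset with `xy` an edge and `xz`, `yz` non-edges, then either (`x << z` and `y << z`)
or (`z << x` and `z << y`). -/
theorem stmt6 (α : Type*) [Fintype α] [PartialOrder α] (x y z : α)
    (hxy : x ≠ y) (hxz : x ≠ z) (hyz : y ≠ z)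
    (exy : (ciGraph α).Adj x y) (exz : ¬ (ciGraph α).Adj x z)
    (eyz : ¬ (ciGraph α).Adj y z) :
    (LtNotCov x z ∧ LtNotCov y z) ∨ (LtNotCov z x ∧ LtNotCov z y) := by
  have nonadj : ∀ a b : α, a ≠ b → ¬ (ciGraph α).Adj a b →
      LtNotCov a b ∨ LtNotCov b a := by
    intro a b hab h
    simp only [ciGraph, not_or, not_and_or, not_not] at h
    obtain ⟨h1, h2, h3⟩ := h
    rcases h3 with h3 | h3
    · exact Or.inl ⟨lt_of_le_of_ne h3 hab, h1⟩
    · exact Or.inr ⟨lt_of_le_of_ne h3 hab.symm, h2⟩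
  rcases nonadj x z hxz exz with hx | hx <;> rcases nonadj y z hyz eyz with hy | hy
  · exact Or.inl ⟨hx, hy⟩
  · -- x << z and z << y : then x < z < y, contradicting adjacency of x y
    exfalso
    have hxy' : x < y := hx.1.trans hy.1
    rcases exy with h | h | h
    · exact h.2 hx.1 hy.1
    · exact absurd h.lt (asymm hxy')
    · exact h.1 hxy'.le
  · exfalso
    have hyx' : y < x := hy.1.trans hx.1
    rcases exy with h | h | h
    · exact absurd h.lt (asymm hyx')
    · exact h.2 hy.1 hx.1
    · exact h.2 hyx'.le
  · exact Or.inr ⟨hx, hy⟩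
end

section
/- Let P be a finite poset, Q a ≺-preserving subposet of P, and H a finite simple graph. If the cover-incomparability graph G_Q contains an induced subgraph isomorphic to H, then the cover-incomparability graph G_P contains an induced subgraph isomorphic to H. -/
/-- A subset `S` of a poset is a `≺`-preserving subposet if for all `u, v ∈ S`,
`u` is covered by `v` in the induced order on `S` iff `u` is covered by `v` in the
ambient poset. -/
def IsCovPreserving {α : Type*} [PartialOrder α] (S : Set α) : Prop :=
  ∀ u v : S, u ⋖ v ↔ (u : α) ⋖ (v : α)

/-- `l` is a saturated chain from `u` to `v`: a list of successive covering
relations starting at `u` and ending at `v`. -/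
def IsSatChain {α : Type*} [PartialOrder α] (u v : α) (l : List α) : Prop :=
  l.Chain' (· ⋖ ·) ∧ l.head? = some u ∧ l.getLast? = some v

/-- A subset `R` of a poset is an isometric subposet if for all `u ≤ v` in `R`
there is a saturated chain from `u` to `v` of minimum length among all saturated
chains from `u` to `v` in the ambient poset, all of whose elements lie in `R`. -/
def IsIsometricSubposet {α : Type*} [PartialOrder α] (R : Set α) : Prop :=
  ∀ u ∈ R, ∀ v ∈ R, u ≤ v →
    ∃ l : List α, IsSatChain u v l ∧
      (∀ l' : List α, IsSatChain u v l' → l.length ≤ l'.length) ∧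
      ∀ x ∈ l, x ∈ R

namespace IsCovPreserving

variable {α : Type*} [PartialOrder α] {Q : Set α}

theorem ciGraph_adj_coe_iff (hQ : IsCovPreserving Q) (u v : Q) :
    (ciGraph α).Adj u v ↔ (ciGraph Q).Adj u v := by
  simp only [ciGraph, hQ u v, hQ v u, Subtype.coe_le_coe]

def ciGraphEmbedding (hQ : IsCovPreserving Q) : ciGraph Q ↪g ciGraph α where
  toEmbedding := Function.Embedding.subtype _
  map_rel_iff' := hQ.ciGraph_adj_coe_iff _ _

end IsCovPreserving

theorem stmt9_general (α : Type*) [PartialOrder α] (Q : Set α)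
    (hQ : IsCovPreserving Q) {β : Type*} (H : SimpleGraph β)
    (h : Nonempty (H ↪g ciGraph Q)) : Nonempty (H ↪g ciGraph α) :=
  h.map fun e => e.trans hQ.ciGraphEmbedding

/-- If `Q` is a `≺`-preserving subposet of a finite poset `P` and the
cover-incomparability graph `G_Q` contains an induced subgraph isomorphic to a finite
graph `H`, then so does `G_P`. -/
theorem stmt9 (α : Type*) [Fintype α] [PartialOrder α] (Q : Set α)
    (hQ : IsCovPreserving Q) {β : Type*} [Fintype β] (H : SimpleGraph β)
    (h : Nonempty (H ↪g ciGraph Q)) : Nonempty (H ↪g ciGraph α) :=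
  stmt9_general α Q hQ H h
end

section
/- Let F be a family of finite simple graphs, and let 𝒢 be the class of finite simple graphs G such that no induced subgraph of G is isomorphic to a member of F. Let 𝒫 be the class of finite posets P whose cover-incomparability graph G_P belongs to 𝒢. Then 𝒫 has a characterization by forbidden ≺-preserving subposets: there exists a family 𝒬 of finite posets such that for every finite poset P, P belongs to 𝒫 iff no ≺-preserving subposet of P is isomorphic (as a poset) to a member of 𝒬. -/
/-- A carrier type with `n` elements carrying no pre-existing order instances. -/
structure Carrier (n : ℕ) where
  val : Fin n

/-- A representation of a finite poset: a size together with a partial order on a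
carrier of that size. -/
def FinPosetRep : Type := Σ n : ℕ, PartialOrder (Carrier n)

/-- The poset `α` contains a `≺`-preserving subposet order-isomorphic to the finite
poset represented by `Q`. -/
def HasCovPresCopy (α : Type) [PartialOrder α] (Q : FinPosetRep) : Prop :=
  letI := Q.2
  ∃ S : Set α, IsCovPreserving S ∧ Nonempty (Carrier Q.1 ≃o ↥S)

/-! The cover-incomparability graph is an order invariant, and a `≺`-preserving subposet `S` of
`P` has `G_S` as an induced subgraph of `G_P`. So one may forbid exactly the finite posets whose
C-I graph contains an induced member of `F`: any such `≺`-preserving subposet of `P` puts a member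
of `F` into `G_P`, and conversely, if `G_P` contains one, then `P` itself (a `≺`-preserving
subposet of itself) is forbidden. -/

def OrderIso.ciGraphIso {α β : Type*} [PartialOrder α] [PartialOrder β] (e : α ≃o β) :
    ciGraph α ≃g ciGraph β where
  toEquiv := e.toEquiv
  map_rel_iff' := by simp [ciGraph, apply_covBy_apply_iff e, e.le_iff_le]

def IsCovPreserving.ciGraphEmbedding_s10 {α : Type*} [PartialOrder α] {S : Set α}
    (hS : IsCovPreserving S) : ciGraph S ↪g ciGraph α where
  toEmbedding := Function.Embedding.subtype _
  map_rel_iff' {u v} := by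
    simp only [ciGraph, Function.Embedding.subtype_apply, ← hS u v, ← hS v u,
      Subtype.coe_le_coe]

theorem isCovPreserving_univ {α : Type*} [PartialOrder α] :
    IsCovPreserving (Set.univ : Set α) :=
  fun _ _ ↦ (apply_covBy_apply_iff (OrderIso.Set.univ (α := α))).symm

theorem HasCovPresCopy.nonempty_ciGraph_embedding {α : Type} [PartialOrder α] {Q : FinPosetRep}
    (hQ : HasCovPresCopy α Q) : letI := Q.2; Nonempty (ciGraph (Carrier Q.1) ↪g ciGraph α) := by
  let _ := Q.2
  obtain ⟨S, hS, ⟨e⟩⟩ := hQ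
  exact ⟨hS.ciGraphEmbedding_s10.comp e.ciGraphIso.toEmbedding⟩

theorem hasCovPresCopy_of_orderIso {α : Type} [PartialOrder α] {Q : FinPosetRep}
    (e : letI := Q.2; Carrier Q.1 ≃o α) : HasCovPresCopy α Q :=
  letI := Q.2
  ⟨Set.univ, isCovPreserving_univ, ⟨e.trans (OrderIso.Set.univ (α := α)).symm⟩⟩

theorem exists_finPosetRep_orderIso (α : Type*) [Fintype α] [PartialOrder α] :
    ∃ Q : FinPosetRep, letI := Q.2; Nonempty (Carrier Q.1 ≃o α) := by
  let g : Carrier (Fintype.card α) ≃ α :=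
    (⟨Carrier.val, Carrier.mk, fun _ ↦ rfl, fun _ ↦ rfl⟩ : Carrier _ ≃ Fin _).trans
      (Fintype.equivFin α).symm
  exact ⟨⟨_, PartialOrder.lift g g.injective⟩, ⟨⟨g, Iff.rfl⟩⟩⟩

def ciGraphForbidden (F : Set (Σ n : ℕ, SimpleGraph (Fin n))) : Set FinPosetRep :=
  {Q | letI := Q.2; ∃ H ∈ F, Nonempty (H.2 ↪g ciGraph (Carrier Q.1))}

/-- If `𝒢` is the class of finite simple graphs avoiding every member of a family `F`
of finite graphs as an induced subgraph, then the class `𝒫` of finite posets whose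
cover-incomparability graph lies in `𝒢` is characterized by forbidden `≺`-preserving
subposets: there is a family `𝒬` of finite posets such that a finite poset belongs to
`𝒫` iff none of its `≺`-preserving subposets is isomorphic to a member of `𝒬`. -/
theorem stmt10 (F : Set (Σ n : ℕ, SimpleGraph (Fin n))) :
    ∃ 𝒬 : Set FinPosetRep,
      ∀ (α : Type) [Fintype α] [PartialOrder α],
        ((∀ H ∈ F, IsEmpty (H.2 ↪g ciGraph α)) ↔
          ∀ Q ∈ 𝒬, ¬ HasCovPresCopy α Q) := by
  refine ⟨ciGraphForbidden F, fun α _ _ ↦ ⟨?_, ?_⟩⟩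
  · rintro hα Q ⟨H, hH, ⟨f⟩⟩ hQ
    obtain ⟨g⟩ := hQ.nonempty_ciGraph_embedding
    exact (hα H hH).false (g.comp f)
  · refine fun h H hH ↦ ⟨fun f ↦ ?_⟩
    obtain ⟨Q, ⟨e⟩⟩ := exists_finPosetRep_orderIso α
    let _ := Q.2
    exact h Q ⟨H, hH, ⟨e.ciGraphIso.symm.toEmbedding.comp f⟩⟩ (hasCovPresCopy_of_orderIso e)
end

section
/- Let Q be a finite poset in which every chain has at most three elements (i.e., the longest chain of Q has length two). Then for every finite poset P, P contains a ≺-preserving subposet isomorphic to Q if and only if P contains an isometric subposet isomorphic to Q. -/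
theorem exists_covBy_covBy_of_lt_of_not_covBy {β : Type*} [PartialOrder β]
    (hchain : ∀ a b c d : β, a < b → b < c → c < d → False) {u v : β}
    (hlt : u < v) (hcov : ¬ u ⋖ v) : ∃ w, u ⋖ w ∧ w ⋖ v := by
  obtain ⟨w, huw, hwv⟩ : ∃ w, u < w ∧ w < v := by
    by_contra! h
    exact hcov ⟨hlt, fun w huw hwv => h w huw hwv⟩
  exact ⟨w, ⟨huw, fun x hux hxw => hchain u x w v hux hxw hwv⟩,
    ⟨hwv, fun x hwx hxv => hchain u w x v huw hwx hxv⟩⟩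

namespace IsSatChain

variable {α : Type*} [PartialOrder α] {u v x y : α} {l : List α}

theorem not_nil : ¬ IsSatChain u v [] := fun h => by simp [IsSatChain] at h

theorem singleton_iff : IsSatChain u v [x] ↔ x = u ∧ u = v := by
  simp only [IsSatChain, List.head?_cons, List.getLast?_singleton, Option.some.injEq]
  constructor
  · rintro ⟨-, rfl, rfl⟩
    exact ⟨rfl, rfl⟩
  · rintro ⟨rfl, rfl⟩
    exact ⟨List.isChain_singleton x, rfl, rfl⟩

theorem cons_cons_iff :
    IsSatChain u v (x :: y :: l) ↔ x = u ∧ x ⋖ y ∧ IsSatChain y v (y :: l) := by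
  refine ⟨fun ⟨hc, hx, hv⟩ => ?_, fun ⟨hx, hxy, hc, _, hv⟩ => ?_⟩
  · obtain ⟨hxy, hc⟩ := List.isChain_cons_cons.1 hc
    exact ⟨Option.some.inj hx, hxy, hc, rfl, hv⟩
  · exact ⟨List.isChain_cons_cons.2 ⟨hxy, hc⟩, congrArg some hx, hv⟩

theorem single (u : α) : IsSatChain u u [u] := singleton_iff.2 ⟨rfl, rfl⟩

theorem cons (h : u ⋖ x) (hl : IsSatChain x v l) : IsSatChain u v (u :: l) := by
  match l, hl with
  | [], hl => exact absurd hl not_nil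
  | y :: l, hl =>
    obtain rfl : y = x := hl.2.1 |> Option.some.inj
    exact cons_cons_iff.2 ⟨rfl, h, hl⟩

theorem le (hl : IsSatChain u v l) : u ≤ v := by
  induction l generalizing u with
  | nil => exact absurd hl not_nil
  | cons x l ih =>
    rcases l with _ | ⟨y, l⟩
    · exact (singleton_iff.1 hl).2.le
    · obtain ⟨rfl, hxy, hl⟩ := cons_cons_iff.1 hl
      exact hxy.le.trans (ih hl)

theorem length_pos (hl : IsSatChain u v l) : 0 < l.length :=
  List.length_pos_iff.2 fun h => not_nil (h ▸ hl)

theorem eq_of_length_le_one (hl : IsSatChain u v l) (h : l.length ≤ 1) : u = v := by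
  match l, hl with
  | [], hl => exact absurd hl not_nil
  | [_], hl => exact (singleton_iff.1 hl).2

theorem eq_or_covBy_of_length_le_two (hl : IsSatChain u v l) (h : l.length ≤ 2) :
    u = v ∨ u ⋖ v := by
  match l, hl with
  | [], hl => exact absurd hl not_nil
  | [_], hl => exact .inl (singleton_iff.1 hl).2
  | [_, _], hl =>
    obtain ⟨rfl, hxy, hy⟩ := cons_cons_iff.1 hl
    obtain ⟨-, rfl⟩ := singleton_iff.1 hy
    exact .inr hxy

theorem exists_mem_lt_lt (hl : IsSatChain u v l) (h : 2 < l.length) :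
    ∃ w ∈ l, u < w ∧ w < v := by
  match l, hl with
  | _ :: w :: x :: l, hl =>
    obtain ⟨rfl, huw, hl⟩ := cons_cons_iff.1 hl
    obtain ⟨-, hwx, hl⟩ := cons_cons_iff.1 hl
    exact ⟨w, by simp, huw.lt, hwx.lt.trans_le hl.le⟩

end IsSatChain

section Subposet

variable {α : Type*} [PartialOrder α]

theorem IsIsometricSubposet.isCovPreserving {R : Set α} (hR : IsIsometricSubposet R) :
    IsCovPreserving R := by
  refine fun u v => ⟨fun huv => ?_, fun huv => ⟨huv.lt, fun w huw hwv => huv.2 huw hwv⟩⟩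
  obtain ⟨l, hl, -, hlR⟩ := hR u u.2 v v.2 huv.le
  by_cases hlen : l.length ≤ 2
  · exact (hl.eq_or_covBy_of_length_le_two hlen).resolve_left (Subtype.coe_ne_coe.2 huv.ne)
  · obtain ⟨w, hwl, huw, hwv⟩ := hl.exists_mem_lt_lt (not_le.1 hlen)
    exact (huv.2 (c := ⟨w, hlR w hwl⟩) huw hwv).elim

theorem IsCovPreserving.isIsometricSubposet {S : Set α} (hS : IsCovPreserving S)
    (hchain : ∀ a b c d : S, a < b → b < c → c < d → False) : IsIsometricSubposet S := by
  intro u hu v hv huv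
  rcases huv.eq_or_lt with rfl | hlt
  · exact ⟨[u], .single u, fun l' hl' => hl'.length_pos, by simpa using hu⟩
  by_cases hcov : (⟨u, hu⟩ : S) ⋖ ⟨v, hv⟩
  · refine ⟨[u, v], .cons ((hS _ _).1 hcov) (.single v), fun l' hl' => ?_, by simp [hu, hv]⟩
    by_contra! hlen
    exact hlt.ne (hl'.eq_of_length_le_one (by simpa using hlen))
  · obtain ⟨w, huw, hwv⟩ := exists_covBy_covBy_of_lt_of_not_covBy hchain hlt hcov
    refine ⟨[u, w, v], .cons ((hS _ _).1 huw) (.cons ((hS _ _).1 hwv) (.single v)),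
      fun l' hl' => ?_, by simp [hu, hv]⟩
    by_contra! hlen
    refine (hl'.eq_or_covBy_of_length_le_two (by simp at hlen; omega)).elim hlt.ne fun h => ?_
    exact hcov ((hS _ _).2 h)

end Subposet

theorem stmt11_general (β : Type*) [PartialOrder β]
    (hchain : ∀ a b c d : β, a < b → b < c → c < d → False)
    (α : Type*) [PartialOrder α] :
    (∃ S : Set α, IsCovPreserving S ∧ Nonempty (β ≃o ↥S)) ↔
      (∃ R : Set α, IsIsometricSubposet R ∧ Nonempty (β ≃o ↥R)) := by
  constructor
  · rintro ⟨S, hS, ⟨e⟩⟩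
    refine ⟨S, hS.isIsometricSubposet fun a b c d hab hbc hcd => ?_, ⟨e⟩⟩
    exact hchain _ _ _ _ (e.symm.strictMono hab) (e.symm.strictMono hbc)
      (e.symm.strictMono hcd)
  · rintro ⟨R, hR, he⟩
    exact ⟨R, hR.isCovPreserving, he⟩

/-- For a finite poset `Q` whose chains all have at most three elements, a finite poset
`P` contains a `≺`-preserving subposet isomorphic to `Q` iff it contains an isometric
subposet isomorphic to `Q`. -/
theorem stmt11 (β : Type*) [Fintype β] [PartialOrder β]
    (hchain : ∀ a b c d : β, a < b → b < c → c < d → False)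
    (α : Type*) [Fintype α] [PartialOrder α] :
    (∃ S : Set α, IsCovPreserving S ∧ Nonempty (β ≃o ↥S)) ↔
      (∃ R : Set α, IsIsometricSubposet R ∧ Nonempty (β ≃o ↥R)) :=
  stmt11_general β hchain α
end

section
/- Let P be a finite poset and G_P its cover-incomparability graph. Then G_P contains an induced claw (an induced subgraph isomorphic to K_{1,3}) if and only if there exist elements u, v, w, x of P such that: u << v, v << w, u << w, x is incomparable to v, (u is covered by x, or x is incomparable to u), and (x ⋖ w, or x is incomparable to w). Here a << b means a < b and b does not cover a. -/
/-- `a` and `b` are incomparable. -/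
def IncompRelCI {α : Type*} [PartialOrder α] (a b : α) : Prop := ¬ a ≤ b ∧ ¬ b ≤ a

lemma nonadj_cases {α : Type*} [PartialOrder α] {a b : α} (hne : a ≠ b)
    (h : ¬ (ciGraph α).Adj a b) : LtNotCov a b ∨ LtNotCov b a := by
  simp only [ciGraph, SimpleGraph.Adj] at h
  push_neg at h
  obtain ⟨h1, h2, h3⟩ := h
  by_cases hle : a ≤ b
  · exact Or.inl ⟨lt_of_le_of_ne hle hne, h1⟩
  · exact Or.inr ⟨lt_of_le_of_ne (h3 hle) hne.symm, h2⟩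

lemma claw_chain {α : Type*} [PartialOrder α] {x a b c : α}
    (_hxa : x ≠ a) (hxb : x ≠ b) (_hxc : x ≠ c)
    (hab : LtNotCov a b) (hbc : LtNotCov b c)
    (Axa : (ciGraph α).Adj x a) (_Axb : (ciGraph α).Adj x b) (Axc : (ciGraph α).Adj x c) :
    ∃ u v w x : α, LtNotCov u v ∧ LtNotCov v w ∧ LtNotCov u w ∧
      IncompRelCI x v ∧ (u ⋖ x ∨ IncompRelCI x u) ∧ (x ⋖ w ∨ IncompRelCI x w) := by
  have hac : LtNotCov a c := ⟨hab.1.trans hbc.1, fun h => h.2 hab.1 hbc.1⟩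
  have hnxb : ¬ x ≤ b := by
    intro hle
    have hlt : x < b := lt_of_le_of_ne hle hxb
    have hxc' : x < c := hlt.trans hbc.1
    rcases Axc with h | h | h
    · exact h.2 hlt hbc.1
    · exact absurd (hxc'.trans h.lt) (lt_irrefl x)
    · exact h.1 hxc'.le
  have hnbx : ¬ b ≤ x := by
    intro hle
    have hlt : b < x := lt_of_le_of_ne hle (Ne.symm hxb)
    have hax : a < x := hab.1.trans hlt
    rcases Axa with h | h | h
    · exact absurd (h.lt.trans hax) (lt_irrefl x)
    · exact h.2 hab.1 hlt
    · exact h.2 hax.le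
  refine ⟨a, b, c, x, hab, hbc, hac, ⟨hnxb, hnbx⟩, ?_, ?_⟩
  · rcases Axa with h | h | h
    · exact absurd (h.lt.trans hab.1).le hnxb
    · exact Or.inl h
    · exact Or.inr h
  · rcases Axc with h | h | h
    · exact Or.inl h
    · exact absurd (hbc.1.trans h.lt).le hnbx
    · exact Or.inr h

/-- The cover-incomparability graph of a finite poset `P` contains an induced claw
iff there are elements `u, v, w, x` of `P` with `u << v`, `v << w`, `u << w`,
`x` incomparable to `v`, (`u ⋖ x` or `x` incomparable to `u`), and
(`x ⋖ w` or `x` incomparable to `w`). -/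
theorem stmt12 (α : Type*) [Fintype α] [PartialOrder α] :
    (∃ x u v w : α, x ≠ u ∧ x ≠ v ∧ x ≠ w ∧ u ≠ v ∧ u ≠ w ∧ v ≠ w ∧
      (ciGraph α).Adj x u ∧ (ciGraph α).Adj x v ∧ (ciGraph α).Adj x w ∧
      ¬ (ciGraph α).Adj u v ∧ ¬ (ciGraph α).Adj u w ∧ ¬ (ciGraph α).Adj v w) ↔
    (∃ u v w x : α, LtNotCov u v ∧ LtNotCov v w ∧ LtNotCov u w ∧
      IncompRelCI x v ∧ (u ⋖ x ∨ IncompRelCI x u) ∧ (x ⋖ w ∨ IncompRelCI x w)) := by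
  constructor
  · rintro ⟨x, u, v, w, hxu, hxv, hxw, huv, huw, hvw, Axu, Axv, Axw, Nuv, Nuw, Nvw⟩
    rcases nonadj_cases huv Nuv with h1 | h1 <;>
    rcases nonadj_cases huw Nuw with h2 | h2 <;>
    rcases nonadj_cases hvw Nvw with h3 | h3
    · exact claw_chain hxu hxv hxw h1 h3 Axu Axv Axw
    · exact claw_chain hxu hxw hxv h2 h3 Axu Axw Axv
    · exact absurd (h1.1.trans (h3.1.trans h2.1)) (lt_irrefl u)
    · exact claw_chain hxw hxu hxv h2 h1 Axw Axu Axv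
    · exact claw_chain hxv hxu hxw h1 h2 Axv Axu Axw
    · exact absurd (h2.1.trans (h3.1.trans h1.1)) (lt_irrefl u)
    · exact claw_chain hxv hxw hxu h3 h2 Axv Axw Axu
    · exact claw_chain hxw hxv hxu h3 h1 Axw Axv Axu
  · rintro ⟨u, v, w, x, huv, hvw, huw, hxv, hxu, hxw⟩
    have hxu' : x ≠ u := by
      rcases hxu with h | h
      · exact fun he => absurd (he ▸ h.lt) (lt_irrefl _)
      · exact fun he => h.1 (he ▸ le_rfl)
    have hxv' : x ≠ v := fun he => hxv.1 (he ▸ le_rfl)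
    have hxw' : x ≠ w := by
      rcases hxw with h | h
      · exact fun he => absurd (he ▸ h.lt) (lt_irrefl _)
      · exact fun he => h.1 (he ▸ le_rfl)
    refine ⟨x, u, v, w, hxu', hxv', hxw', huv.1.ne, huw.1.ne, hvw.1.ne, ?_, ?_, ?_, ?_, ?_, ?_⟩
    · rcases hxu with h | h
      · exact Or.inr (Or.inl h)
      · exact Or.inr (Or.inr h)
    · exact Or.inr (Or.inr hxv)
    · rcases hxw with h | h
      · exact Or.inl h
      · exact Or.inr (Or.inr h)
    · rintro (h | h | h)
      · exact huv.2 h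
      · exact absurd (huv.1.trans h.lt) (lt_irrefl u)
      · exact h.1 huv.1.le
    · rintro (h | h | h)
      · exact huw.2 h
      · exact absurd (huw.1.trans h.lt) (lt_irrefl u)
      · exact h.1 huw.1.le
    · rintro (h | h | h)
      · exact hvw.2 h
      · exact absurd (hvw.1.trans h.lt) (lt_irrefl v)
      · exact h.1 hvw.1.le
end

section
/- Let P be the poset on the five-element set {v1, v2, v3, v4, x} whose order is generated by the covering relations v1 ⋖ v2 ⋖ v3 ⋖ v4 and v1 ⋖ x ⋖ v4. Then in the cover-incomparability graph G_P, the subgraph induced by {v1, v2, v3, v4} is isomorphic to the path P4 on four vertices (edges exactly v1–v2, v2–v3, v3–v4); consequently G_P is not a cograph. -/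
/-- The poset on `{v1, v2, v3, v4, x}` generated by the covering relations
`v1 ⋖ v2 ⋖ v3 ⋖ v4` and `v1 ⋖ x ⋖ v4`. -/
inductive V5 : Type
  | v1 | v2 | v3 | v4 | x
  deriving DecidableEq

instance : Fintype V5 where
  elems := {V5.v1, V5.v2, V5.v3, V5.v4, V5.x}
  complete := by
    intro a
    cases a <;> simp

open V5

def le5 : V5 → V5 → Bool
  | v1, _ => true
  | _, v4 => true
  | v2, v2 | v2, v3 => true
  | v3, v3 => true
  | x, x => true
  | _, _ => false

instance : PartialOrder V5 where
  le a b := le5 a b = true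
  le_refl a := by
    have h : ∀ z : V5, le5 z z = true := by decide
    exact h a
  le_trans a b c hab hbc := by
    have h : ∀ p q r : V5, le5 p q = true → le5 q r = true → le5 p r = true := by decide
    exact h a b c hab hbc
  le_antisymm a b hab hba := by
    have h : ∀ p q : V5, le5 p q = true → le5 q p = true → p = q := by decide
    exact h a b hab hba

namespace SimpleGraph

variable {V : Type*} {G : SimpleGraph V}

def pathGraphFourEmbedding {a b c d : V} (hab : G.Adj a b) (hbc : G.Adj b c)
    (hcd : G.Adj c d) (hac : ¬ G.Adj a c) (had : ¬ G.Adj a d) (hbd : ¬ G.Adj b d) :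
    pathGraph 4 ↪g G where
  toFun := ![a, b, c, d]
  inj' := by
    have : a ≠ c := fun h => had (h ▸ hcd)
    have : a ≠ d := fun h => hbd (h ▸ hab.symm)
    have : b ≠ d := fun h => had (h ▸ hab)
    intro i j
    fin_cases i <;> fin_cases j <;> simp_all [hab.ne, hbc.ne, hcd.ne, eq_comm]
  map_rel_iff' := by
    intro i j
    change G.Adj (![a, b, c, d] i) (![a, b, c, d] j) ↔ _
    fin_cases i <;> fin_cases j <;> simp_all [pathGraph_adj, adj_comm]

end SimpleGraph

section CIGraph

variable {α : Type*} [PartialOrder α] {a b c : α}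

theorem ciGraph_adj_of_covBy (h : a ⋖ b) : (ciGraph α).Adj a b :=
  Or.inl h

theorem ciGraph_not_adj_of_lt_of_lt (hab : a < b) (hbc : b < c) : ¬ (ciGraph α).Adj a c := by
  rintro (hac | hca | ⟨hac, -⟩)
  · exact hac.2 hab hbc
  · exact (hab.trans hbc).not_gt hca.lt
  · exact hac (hab.trans hbc).le

end CIGraph

namespace V5

instance : DecidableLE V5 := fun a b => inferInstanceAs (Decidable (le5 a b = true))

instance : DecidableLT V5 := decidableLTOfDecidableLE

theorem v1_covBy_v2 : v1 ⋖ v2 := ⟨by decide, fun c => by cases c <;> decide⟩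
theorem v2_covBy_v3 : v2 ⋖ v3 := ⟨by decide, fun c => by cases c <;> decide⟩
theorem v3_covBy_v4 : v3 ⋖ v4 := ⟨by decide, fun c => by cases c <;> decide⟩

end V5

/-- In the poset generated by the covers `v1 ⋖ v2 ⋖ v3 ⋖ v4` and `v1 ⋖ x ⋖ v4`, the
subgraph of the cover-incomparability graph induced by `{v1, v2, v3, v4}` is the path
`P4` (edges exactly `v1–v2`, `v2–v3`, `v3–v4`); consequently the
cover-incomparability graph is not a cograph (it has an induced `P4`). -/
theorem stmt16 :
    ((ciGraph V5).Adj v1 v2 ∧ (ciGraph V5).Adj v2 v3 ∧ (ciGraph V5).Adj v3 v4 ∧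
      ¬ (ciGraph V5).Adj v1 v3 ∧ ¬ (ciGraph V5).Adj v1 v4 ∧
      ¬ (ciGraph V5).Adj v2 v4) ∧
    Nonempty (SimpleGraph.pathGraph 4 ↪g ciGraph V5) := by
  have h12 := ciGraph_adj_of_covBy v1_covBy_v2
  have h23 := ciGraph_adj_of_covBy v2_covBy_v3
  have h34 := ciGraph_adj_of_covBy v3_covBy_v4
  have h13 := ciGraph_not_adj_of_lt_of_lt v1_covBy_v2.lt v2_covBy_v3.lt
  have h14 := ciGraph_not_adj_of_lt_of_lt v1_covBy_v2.lt (v2_covBy_v3.lt.trans v3_covBy_v4.lt)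
  have h24 := ciGraph_not_adj_of_lt_of_lt v2_covBy_v3.lt v3_covBy_v4.lt
  exact ⟨⟨h12, h23, h34, h13, h14, h24⟩,
    ⟨SimpleGraph.pathGraphFourEmbedding h12 h23 h34 h13 h14 h24⟩⟩
end
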